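/- Fix an integer m ≥ 1, set x(t) = cos(2t), y(t) = cos((2m+1)t + 1/2), and Z(t) = cos((6m+7)t + π/4). Let k be an integer with 1 ≤ k ≤ 2m and let t₁ = (2(2m+1) − 2k)π/(2(2m+1)), t₂ = (2(2m+1) + 2k)π/(2(2m+1)) be the Type II double-point times with j = 2. Then sign[(x′(t₁) y′(t₂) − x′(t₂) y′(t₁)) · (Z(t₁) − Z(t₂))] = −sign[cos(2kπ/(2m+1))] = −sign[x(t₁)]; in particular this quantity is nonzero, and it is negative exactly when the double point has positive x-coordinate. -/

import Mathlib

open Real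

/-!
Write `N = 2m + 1` and `φ = kπ/N`, so that `t₁ = π - φ`, `t₂ = π + φ` and `Nφ = kπ`. Then
`N t₁ = (N - k)π` and `N t₂ = (N + k)π` have the same parity sign `ε = (-1)^(N + k)`, so
`y'(t₁) = y'(t₂) = -εN sin(1/2)`; and since `6m + 7 = 3N + 4`, also `Z(π ∓ φ) = ε cos(π/4 ∓ 4φ)`.
As `ε² = 1`, the crossing quantity equals `-16 N sin(1/2) sin(π/4) sin²(2φ) cos(2φ)`, and
`cos(2φ) = x(t₁)`. Finally `cos(jπ/N) ≠ 0` for every integer `j` because `N` is odd, which gives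
both `cos(2φ) ≠ 0` and, with `0 < φ < π`, `sin(2φ) ≠ 0`.
-/

lemma deriv_cos_mul_add (c d t : ℝ) :
    deriv (fun s => cos (c * s + d)) t = -(c * sin (c * t + d)) := by
  simpa [mul_comm] using (((hasDerivAt_id t).const_mul c).add_const d).cos.deriv

lemma neg_one_zpow_eq_of_even_sub {K : Type*} [DivisionRing K] {i j : ℤ} (h : Even (i - j)) :
    (-1 : K) ^ i = (-1) ^ j := by
  rw [← Int.cast_negOnePow, ← Int.cast_negOnePow, (Int.negOnePow_eq_iff i j).2 h]

section CrossingAtReflectedTimes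

variable {n j : ℤ} {s : ℝ}

lemma sin_mul_pi_add_add (h : (n : ℝ) * s = j * π) (a : ℝ) :
    sin (n * (π + s) + a) = (-1) ^ (n + j) * sin a := by
  rw [← sin_add_int_mul_pi]; push_cast; congr 1; linear_combination h

lemma cos_three_mul_add_four_mul_pi_add_add (h : (n : ℝ) * s = j * π) (b : ℝ) :
    cos ((3 * n + 4) * (π + s) + b) = (-1) ^ (n + j) * cos (b + 4 * s) := by
  rw [neg_one_zpow_eq_of_even_sub (j := 3 * n + 4 + 3 * j) ⟨-n - j - 2, by ring⟩,
    ← cos_add_int_mul_pi]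
  push_cast; congr 1; linear_combination 3 * h

end CrossingAtReflectedTimes

theorem crossing_product_eq (n k : ℤ) (a b φ : ℝ) (hφ : (n : ℝ) * φ = k * π)
    (x y z : ℝ → ℝ) (hx : ∀ t, x t = cos (2 * t)) (hy : ∀ t, y t = cos (n * t + a))
    (hz : ∀ t, z t = cos ((3 * n + 4) * t + b)) :
    (deriv x (π - φ) * deriv y (π + φ) - deriv x (π + φ) * deriv y (π - φ)) *
        (z (π - φ) - z (π + φ)) =
      -(16 * n * sin a * sin b * sin (2 * φ) ^ 2) * cos (2 * φ) := by
  obtain rfl : x = fun t => cos (2 * t + 0) := funext fun t => by rw [hx, add_zero]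
  obtain rfl : y = fun t => cos (n * t + a) := funext hy
  have hdx (s : ℝ) : deriv (fun t => cos (2 * t + 0)) (π + s) = -(2 * sin (2 * s)) := by
    rw [deriv_cos_mul_add, add_zero, mul_add, sin_add, sin_two_pi, cos_two_pi]; ring
  have hdy {j : ℤ} {s : ℝ} (h : (n : ℝ) * s = j * π) :
      deriv (fun t => cos (n * t + a)) (π + s) = -(n * ((-1) ^ (n + j) * sin a)) := by
    rw [deriv_cos_mul_add, sin_mul_pi_add_add h]
  have hφ' : (n : ℝ) * -φ = ↑(-k) * π := by push_cast; linear_combination -hφ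
  have hε : (-1 : ℝ) ^ (n + -k) = (-1) ^ (n + k) := neg_one_zpow_eq_of_even_sub ⟨-k, by ring⟩
  have hε2 : ((-1 : ℝ) ^ (n + k)) ^ 2 = 1 := by rw [← sq_abs, abs_neg_one_zpow, one_pow]
  have hcos_diff :
      cos (b + 4 * -φ) - cos (b + 4 * φ) = 4 * sin b * sin (2 * φ) * cos (2 * φ) := by
    rw [mul_neg, ← sub_eq_add_neg, cos_sub, cos_add, show 4 * φ = 2 * (2 * φ) by ring, sin_two_mul]
    ring
  rw [sub_eq_add_neg π φ, hdx, hdx, hdy hφ, hdy hφ', hz, hz,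
    cos_three_mul_add_four_mul_pi_add_add hφ, cos_three_mul_add_four_mul_pi_add_add hφ', hε,
    mul_neg 2 φ, sin_neg]
  linear_combination (-4 * n * sin a * sin (2 * φ)) * ((-1 : ℝ) ^ (n + k)) ^ 2 * hcos_diff
    + (-16 * n * sin a * sin b * sin (2 * φ) ^ 2 * cos (2 * φ)) * hε2

lemma cos_int_mul_pi_div_ne_zero {j N : ℤ} (hN : Odd N) : cos (j * π / N) ≠ 0 := by
  intro h
  obtain ⟨i, hi⟩ := cos_eq_zero_iff.1 h
  have hN0 : (N : ℝ) ≠ 0 := Int.cast_ne_zero.2 (by rintro rfl; simp at hN)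
  have hij : 2 * j = (2 * i + 1) * N := by
    field_simp at hi
    exact_mod_cast (by linear_combination hi : (2 * j : ℝ) = (2 * i + 1) * N)
  exact Int.not_odd_iff_even.2 (even_two_mul j)
    (hij ▸ Int.odd_mul.2 ⟨odd_two_mul_add_one i, hN⟩)

lemma sign_neg_mul_of_pos {C : ℝ} (hC : 0 < C) (c : ℝ) : sign (-C * c) = -sign c := by
  rw [neg_mul, sign_neg]
  rcases lt_trichotomy c 0 with hc | rfl | hc
  · rw [sign_of_neg (mul_neg_of_pos_of_neg hC hc), sign_of_neg hc]
  · rw [mul_zero]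
  · rw [sign_of_pos (mul_pos hC hc), sign_of_pos hc]

theorem typeII_j2_crossing_sign_general
    (m k : ℤ) (hk1 : 1 ≤ k) (hk2 : k ≤ 2 * m)
    (x y Z : ℝ → ℝ)
    (hx : ∀ t, x t = Real.cos (2 * t))
    (hy : ∀ t, y t = Real.cos ((2 * (m : ℝ) + 1) * t + 1 / 2))
    (hZ : ∀ t, Z t = Real.cos ((6 * (m : ℝ) + 7) * t + π / 4))
    (t₁ t₂ : ℝ)
    (ht₁ : t₁ = (2 * (2 * (m : ℝ) + 1) - 2 * (k : ℝ)) * π / (2 * (2 * (m : ℝ) + 1)))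
    (ht₂ : t₂ = (2 * (2 * (m : ℝ) + 1) + 2 * (k : ℝ)) * π / (2 * (2 * (m : ℝ) + 1))) :
    Real.sign ((deriv x t₁ * deriv y t₂ - deriv x t₂ * deriv y t₁) * (Z t₁ - Z t₂)) =
        -Real.sign (Real.cos (2 * (k : ℝ) * π / (2 * (m : ℝ) + 1))) ∧
    Real.sign ((deriv x t₁ * deriv y t₂ - deriv x t₂ * deriv y t₁) * (Z t₁ - Z t₂)) =
        -Real.sign (x t₁) ∧
    Real.sign ((deriv x t₁ * deriv y t₂ - deriv x t₂ * deriv y t₁) * (Z t₁ - Z t₂)) ≠ 0 ∧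
    ((deriv x t₁ * deriv y t₂ - deriv x t₂ * deriv y t₁) * (Z t₁ - Z t₂) < 0 ↔
      0 < x t₁) := by
  have hN : (0 : ℝ) < 2 * m + 1 := by exact_mod_cast (by omega : (0 : ℤ) < 2 * m + 1)
  have hkN : (k : ℝ) < 2 * m + 1 := by exact_mod_cast (by omega : k < 2 * m + 1)
  set φ := k * π / (2 * m + 1) with hφ_def
  have hφ : ((2 * m + 1 : ℤ) : ℝ) * φ = k * π := by push_cast; rw [hφ_def]; field_simp
  have ht₁φ : t₁ = π - φ := by rw [ht₁, hφ_def]; field_simp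
  have ht₂φ : t₂ = π + φ := by rw [ht₂, hφ_def]; field_simp
  have hcross := crossing_product_eq _ k (1 / 2) (π / 4) φ hφ x y Z hx
    (by push_cast; exact hy) (fun t => by rw [hZ]; push_cast; ring_nf)
  rw [← ht₁φ, ← ht₂φ] at hcross
  have hsin : sin (2 * φ) ≠ 0 := by
    rw [sin_two_mul]
    refine mul_ne_zero (mul_ne_zero two_ne_zero (sin_pos_of_pos_of_lt_pi ?_ ?_).ne') ?_
    · positivity
    · rw [div_lt_iff₀ hN]; nlinarith [pi_pos]
    · simpa using cos_int_mul_pi_div_ne_zero (j := k) (odd_two_mul_add_one m)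
  have hC : 0 < 16 * ((2 * m + 1 : ℤ) : ℝ) * sin (1 / 2) * sin (π / 4) * sin (2 * φ) ^ 2 := by
    have : 0 < sin (1 / 2) := sin_pos_of_pos_of_lt_pi (by norm_num) (by linarith [pi_gt_three])
    have : 0 < sin (π / 4) := by rw [sin_pi_div_four]; positivity
    push_cast; positivity
  have hcos : cos (2 * φ) ≠ 0 := by
    convert cos_int_mul_pi_div_ne_zero (j := 2 * k) (odd_two_mul_add_one m) using 2
    rw [hφ_def]; push_cast; ring
  have hx₁ : x t₁ = cos (2 * φ) := by
    rw [hx, ht₁φ, mul_sub, cos_sub, cos_two_pi, sin_two_pi]; ring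
  rw [hcross, hx₁, show 2 * (k : ℝ) * π / (2 * m + 1) = 2 * φ by rw [hφ_def]; ring,
    sign_neg_mul_of_pos hC]
  refine ⟨rfl, rfl, neg_ne_zero.2 (sign_eq_zero_iff.not.2 hcos), ?_⟩
  rw [neg_mul, neg_lt_zero, mul_pos_iff_of_pos_left hC]

/-- The sign of the crossing `C^{II}_{k,2}` of the Lissajous curve with
`x(t) = cos 2t`, `y(t) = cos((2m+1)t + 1/2)`, and height function
`Z(t) = cos((6m+7)t + π/4)` equals `−sign(cos(2kπ/(2m+1))) = −sign(x(t₁))`; in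
particular it is nonzero, and it is negative exactly when the double point lies in
the right half-plane. -/
theorem typeII_j2_crossing_sign
    (m k : ℤ) (hm : 1 ≤ m) (hk1 : 1 ≤ k) (hk2 : k ≤ 2 * m)
    (x y Z : ℝ → ℝ)
    (hx : ∀ t, x t = Real.cos (2 * t))
    (hy : ∀ t, y t = Real.cos ((2 * (m : ℝ) + 1) * t + 1 / 2))
    (hZ : ∀ t, Z t = Real.cos ((6 * (m : ℝ) + 7) * t + π / 4))
    (t₁ t₂ : ℝ)
    (ht₁ : t₁ = (2 * (2 * (m : ℝ) + 1) - 2 * (k : ℝ)) * π / (2 * (2 * (m : ℝ) + 1)))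
    (ht₂ : t₂ = (2 * (2 * (m : ℝ) + 1) + 2 * (k : ℝ)) * π / (2 * (2 * (m : ℝ) + 1))) :
    Real.sign ((deriv x t₁ * deriv y t₂ - deriv x t₂ * deriv y t₁) * (Z t₁ - Z t₂)) =
        -Real.sign (Real.cos (2 * (k : ℝ) * π / (2 * (m : ℝ) + 1))) ∧
    Real.sign ((deriv x t₁ * deriv y t₂ - deriv x t₂ * deriv y t₁) * (Z t₁ - Z t₂)) =
        -Real.sign (x t₁) ∧
    Real.sign ((deriv x t₁ * deriv y t₂ - deriv x t₂ * deriv y t₁) * (Z t₁ - Z t₂)) ≠ 0 ∧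
    ((deriv x t₁ * deriv y t₂ - deriv x t₂ * deriv y t₁) * (Z t₁ - Z t₂) < 0 ↔
      0 < x t₁) :=
  typeII_j2_crossing_sign_general m k hk1 hk2 x y Z hx hy hZ t₁ t₂ ht₁ ht₂
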